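/- For every path P of π there is a unique element of P with the maximum extended rank (among elements whose extended rank is defined). -/

import Mathlib

/-- The `b`-local minima of a path, represented as the list of values (in path order):
a position is kept iff its value is smaller than all values at distance at most `b` in the
list, comparisons with out-of-range (undefined) positions being disregarded. -/
def pmins (b : ℕ) (l : List ℕ) : List ℕ :=
  (List.range l.length).filterMap fun p =>
    if ∀ q ∈ List.range l.length, q ≠ p → p ≤ q + b → q ≤ p + b → l.getD p 0 < l.getD q 0
    then some (l.getD p 0) else none

/-- `plevel b l r` is the list of elements of `E_{r+1}` of the path `l` (0-indexed:
`plevel b l 0 = l` is `E_1`), in path order. -/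
def plevel (b : ℕ) (l : List ℕ) : ℕ → List ℕ
  | 0 => l
  | r + 1 => pmins b (plevel b l r)

/-- Advance `s` steps along the (level) list `l` from the element with value `v`;
`none` if undefined (i.e. `v ∉ l` or the advance would run past the end of the path). -/
def padv (s : ℕ) (l : List ℕ) (v : ℕ) : Option ℕ :=
  if v ∈ l ∧ l.idxOf v + s < l.length then some (l.getD (l.idxOf v + s) 0) else none

/-- Retreat `s` steps along the (level) list `l` from the element with value `v`;
`none` if undefined. -/
def pret (s : ℕ) (l : List ℕ) (v : ℕ) : Option ℕ :=
  if v ∈ l ∧ s ≤ l.idxOf v then some (l.getD (l.idxOf v - s) 0) else none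

/-- `iSeqP b l i k` is the element `i_{k+1}` of the (tentative) `b`-staircase from `i` on the
path `l`: `i_1 = i` and `i_{k+1} = π_k^b(i_k)`; `none` if undefined. -/
def iSeqP (b : ℕ) (l : List ℕ) (i : ℕ) : ℕ → Option ℕ
  | 0 => if i ∈ l then some i else none
  | k + 1 => (iSeqP b l i k).bind (padv b (plevel b l k))

/-- `jSeqP b l r m q` is the element `j_{r+1-q}` of the descending part of the `b`-staircase of
size `r` with middle `m` on the path `l`: `j_{r+1} = m` and `j_k = π_k^b(j_{k+1})`. -/
def jSeqP (b : ℕ) (l : List ℕ) (r m : ℕ) : ℕ → Option ℕ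
  | 0 => some m
  | q + 1 => (jSeqP b l r m q).bind (padv b (plevel b l (r - (q + 1))))

/-- There is a `b`-staircase of size `r` from `i` on the path `l`. -/
def IsStaircaseP (b : ℕ) (l : List ℕ) (r i : ℕ) : Prop :=
  ∃ m, iSeqP b l i r = some m ∧ m ∈ plevel b l r ∧ (jSeqP b l r m r).isSome

/-- There is an almost `b`-staircase of size `r` from `i` on the path `l`
(membership in `E_k` required only for `k ∈ [r]`). -/
def IsAlmostP (b : ℕ) (l : List ℕ) (r i : ℕ) : Prop :=
  ∃ m, iSeqP b l i r = some m ∧ (jSeqP b l r m r).isSome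

/-- The `b`-staircase of size `r` from `i` is the best one: on a path every almost
`b`-staircase is proper, so `i` has no almost `b`-staircase of size `r+1`. -/
def IsBestP (b : ℕ) (l : List ℕ) (r i : ℕ) : Prop :=
  IsStaircaseP b l r i ∧ ¬ IsAlmostP b l (r + 1) i

/-- There is a half `b`-staircase of size `r` from `i` on the path `l`:
`i_1 = i, …, i_{r+1} = m = j_r, j_{r-1}, …, j_1`. -/
def IsHalfP (b : ℕ) (l : List ℕ) (r i : ℕ) : Prop :=
  ∃ m, iSeqP b l i r = some m ∧ (jSeqP b l (r - 1) m (r - 1)).isSome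

/-- `ExtRank b l i v` says that the extended rank of `i` on the path `l` is `(t, h)`,
encoded (lexicographically faithfully) as the natural number `v = 2t + h`, where `t` is the
rank of `i` (the size of the best staircase from `i`) and `h` records whether a half staircase
of size `t+1` from `i` exists. -/
def ExtRank (b : ℕ) (l : List ℕ) (i v : ℕ) : Prop :=
  ∃ t, IsBestP b l t i ∧
    ((IsHalfP b l (t + 1) i ∧ v = 2 * t + 1) ∨ (¬ IsHalfP b l (t + 1) i ∧ v = 2 * t))

/-- `len(u,w) = min{k > 0 : π^k(u) = w}` (0 if unreachable). -/
noncomputable def lenTo {n : ℕ} (π : Equiv.Perm (Fin n)) (u w : Fin n) : ℕ :=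
  letI := Classical.propDecidable
  if h : ∃ k, 0 < k ∧ (⇑π)^[k] u = w then Nat.find h else 0

/-- The path obtained from the cycle of `π` containing `x` by cutting before `π(x)`
(i.e. setting `π(x) := ⊥`), as the list of its elements (values) in path order:
it starts at `π(x)` and ends at `x`. -/
noncomputable def pathOf {n : ℕ} (π : Equiv.Perm (Fin n)) (x : Fin n) : List ℕ :=
  (List.range (lenTo π x x)).map fun j => ((⇑π)^[j + 1] x).val

/-!
On a path every level `E_k` is a sublist of the path, and walking along a level is monotone:
if `i` precedes `i'` then `i_k` precedes `i'_k` for every `k`, and if the descent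
`j_r, …, j_1` exists from a middle `m'` of `E_r`, it exists from every earlier middle.
So two elements `i` before `i'` cannot share an extended rank `(t, h)`: if `h` is false,
the staircase of `i'` yields a half staircase of size `t + 1` from `i`; if `h` is true, the
half staircase of `i'` yields an almost staircase of size `t + 1` from `i`, so the staircase of
size `t` from `i` is not the best one. Extended ranks are bounded by the length of the path and
the last element has extended rank `(0, false)`, so the maximum is attained, and only once.
-/

open Function
open scoped List

lemma List.filterMap_ite_sublist_map {α β : Type*} (c : α → Prop) [DecidablePred c] (f : α → β)
    (xs : List α) : xs.filterMap (fun a => if c a then some (f a) else none) <+ xs.map f := by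
  induction xs with
  | nil => simp
  | cons a xs ih => by_cases h : c a <;> simp [h, ih]

lemma List.map_getD_range {α : Type*} (l : List α) (d : α) :
    (List.range l.length).map (l.getD · d) = l :=
  List.ext_getElem (by simp) fun i _ h => by simp [h]

theorem List.Sublist.idxOf_lt_idxOf_iff {α : Type*} [DecidableEq α] {l' l : List α}
    (h : l' <+ l) (hl : l.Nodup) {u w : α} (hu : u ∈ l') (hw : w ∈ l') :
    l'.idxOf u < l'.idxOf w ↔ l.idxOf u < l.idxOf w := by
  obtain ⟨f, hf⟩ := List.sublist_iff_exists_orderEmbedding_getElem?_eq.mp h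
  have hpos : ∀ v ∈ l', l.idxOf v = f (l'.idxOf v) := by
    intro v hv
    obtain ⟨hlt, hget⟩ := List.getElem?_eq_some_iff.mp
      ((hf _).symm.trans (List.getElem?_idxOf hv))
    exact (congrArg l.idxOf hget).symm.trans (hl.idxOf_getElem _ _)
  rw [hpos u hu, hpos w hw, f.lt_iff_lt]

theorem List.Sublist.idxOf_le_idxOf_iff {α : Type*} [DecidableEq α] {l' l : List α}
    (h : l' <+ l) (hl : l.Nodup) {u w : α} (hu : u ∈ l') (hw : w ∈ l') :
    l'.idxOf u ≤ l'.idxOf w ↔ l.idxOf u ≤ l.idxOf w := by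
  simp only [← not_lt, h.idxOf_lt_idxOf_iff hl hw hu]

lemma pmins_sublist (b : ℕ) (l : List ℕ) : pmins b l <+ l := by
  conv_rhs => rw [← l.map_getD_range 0]
  exact List.filterMap_ite_sublist_map _ _ _

lemma plevel_sublist_plevel (b : ℕ) (l : List ℕ) {r s : ℕ} (h : r ≤ s) :
    plevel b l s <+ plevel b l r := by
  induction s, h using Nat.le_induction with
  | base => exact .refl _
  | succ s _ ih => exact (pmins_sublist b _).trans ih

lemma plevel_sublist (b : ℕ) (l : List ℕ) (r : ℕ) : plevel b l r <+ l :=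
  plevel_sublist_plevel b l r.zero_le

lemma padv_isSome_iff {s : ℕ} {L : List ℕ} {v : ℕ} :
    (padv s L v).isSome ↔ v ∈ L ∧ L.idxOf v + s < L.length := by
  unfold padv; split_ifs <;> simp_all

lemma padv_eq_some_iff {s : ℕ} {L : List ℕ} (hL : L.Nodup) {v z : ℕ} :
    padv s L v = some z ↔ v ∈ L ∧ z ∈ L ∧ L.idxOf z = L.idxOf v + s := by
  unfold padv
  constructor
  · intro h
    split_ifs at h with hv
    obtain rfl : L[L.idxOf v + s] = z := by simpa [hv.2] using h
    exact ⟨hv.1, List.getElem_mem _, hL.idxOf_getElem _ _⟩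
  · rintro ⟨hv, hz, hzv⟩
    simp [hv, ← hzv, List.idxOf_lt_length_of_mem hz]

lemma exists_padv_eq_some {s : ℕ} {L : List ℕ} (hL : L.Nodup) {v : ℕ} (hv : v ∈ L)
    (hlt : L.idxOf v + s < L.length) :
    ∃ z, padv s L v = some z ∧ z ∈ L ∧ L.idxOf z = L.idxOf v + s := by
  obtain ⟨z, hz⟩ := Option.isSome_iff_exists.mp (padv_isSome_iff.mpr ⟨hv, hlt⟩)
  exact ⟨z, hz, ((padv_eq_some_iff hL).mp hz).2⟩

lemma jSeqP_succ_succ (b : ℕ) (l : List ℕ) (r m q : ℕ) :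
    jSeqP b l (r + 1) m (q + 1) = (padv b (plevel b l r) m).bind (jSeqP b l r · q) := by
  induction q with
  | zero => simp [jSeqP]
  | succ q ih =>
    rw [jSeqP, ih, Option.bind_assoc]
    congr 1
    funext z
    rw [jSeqP, show r + 1 - (q + 1 + 1) = r - (q + 1) by omega]

lemma jSeqP_isSome_succ_iff (b : ℕ) (l : List ℕ) (r m : ℕ) :
    (jSeqP b l (r + 1) m (r + 1)).isSome ↔
      ∃ z, padv b (plevel b l r) m = some z ∧ (jSeqP b l r z r).isSome := by
  rw [jSeqP_succ_succ]
  cases padv b (plevel b l r) m <;> simp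

section Staircases

variable {b : ℕ} {l : List ℕ}

lemma plevel_nodup (hl : l.Nodup) (r : ℕ) : (plevel b l r).Nodup :=
  (plevel_sublist b l r).nodup hl

lemma iSeqP_succ_eq_some_iff {i k z : ℕ} :
    iSeqP b l i (k + 1) = some z ↔
      ∃ m, iSeqP b l i k = some m ∧ padv b (plevel b l k) m = some z :=
  Option.bind_eq_some_iff

lemma idxOf_lt_idxOf_iSeqP (hl : l.Nodup) {i i' : ℕ} (hii' : l.idxOf i < l.idxOf i') :
    ∀ {k m m'}, iSeqP b l i k = some m → iSeqP b l i' k = some m' → l.idxOf m < l.idxOf m'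
  | 0, m, m', h, h' => by
    simp only [iSeqP, Option.ite_none_right_eq_some, Option.some.injEq] at h h'
    rwa [← h.2, ← h'.2]
  | k + 1, m, m', h, h' => by
    obtain ⟨a, ha, hm⟩ := iSeqP_succ_eq_some_iff.mp h
    obtain ⟨a', ha', hm'⟩ := iSeqP_succ_eq_some_iff.mp h'
    have hsub := plevel_sublist b l k
    have hL := plevel_nodup hl k (b := b)
    obtain ⟨haL, hmL, hmidx⟩ := (padv_eq_some_iff hL).mp hm
    obtain ⟨haL', hmL', hmidx'⟩ := (padv_eq_some_iff hL).mp hm'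
    have := (hsub.idxOf_lt_idxOf_iff hl haL haL').mpr (idxOf_lt_idxOf_iSeqP hl hii' ha ha')
    exact (hsub.idxOf_lt_idxOf_iff hl hmL hmL').mp (by omega)

lemma idxOf_add_le_idxOf_iSeqP (hb : 0 < b) (hl : l.Nodup) {i : ℕ} :
    ∀ {k m}, iSeqP b l i k = some m → l.idxOf i + k ≤ l.idxOf m
  | 0, m, h => by
    simp only [iSeqP, Option.ite_none_right_eq_some, Option.some.injEq] at h
    simp [h.2]
  | k + 1, m, h => by
    obtain ⟨a, ha, hm⟩ := iSeqP_succ_eq_some_iff.mp h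
    obtain ⟨haL, hmL, hmidx⟩ := (padv_eq_some_iff (plevel_nodup hl k)).mp hm
    have := ((plevel_sublist b l k).idxOf_lt_idxOf_iff hl haL hmL).mp (by omega)
    have := idxOf_add_le_idxOf_iSeqP hb hl ha
    omega

lemma jSeqP_isSome_of_idxOf_le (hl : l.Nodup) :
    ∀ {r m₁ m₂}, m₁ ∈ plevel b l r → m₂ ∈ plevel b l r →
      (plevel b l r).idxOf m₁ ≤ (plevel b l r).idxOf m₂ →
      (jSeqP b l r m₂ r).isSome → (jSeqP b l r m₁ r).isSome
  | 0, _, _, _, _, _, _ => rfl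
  | r + 1, m₁, m₂, h₁, h₂, hle, hD => by
    rw [jSeqP_isSome_succ_iff] at hD ⊢
    obtain ⟨z₂, hz₂, hD₂⟩ := hD
    have hsub : plevel b l (r + 1) <+ plevel b l r := pmins_sublist b _
    have hL := plevel_nodup hl r (b := b)
    have hle' := (hsub.idxOf_le_idxOf_iff hL h₁ h₂).mp hle
    obtain ⟨-, hz₂L, hz₂idx⟩ := (padv_eq_some_iff hL).mp hz₂
    obtain ⟨z₁, hz₁, hz₁L, hz₁idx⟩ := exists_padv_eq_some (s := b) hL (hsub.subset h₁)
      (by have := List.idxOf_lt_length_of_mem hz₂L; omega)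
    exact ⟨z₁, hz₁, jSeqP_isSome_of_idxOf_le hl hz₁L hz₂L (by omega) hD₂⟩

lemma isHalfP_succ_of_idxOf_lt (hl : l.Nodup) {t i i' : ℕ} (hii' : l.idxOf i < l.idxOf i')
    (hi : IsStaircaseP 1 l t i) (hi' : IsStaircaseP 1 l t i') : IsHalfP 1 l (t + 1) i := by
  obtain ⟨m, him, hmL, -⟩ := hi
  obtain ⟨m', him', hm'L, hD'⟩ := hi'
  have hL := plevel_nodup hl t (b := 1)
  have hmm' := ((plevel_sublist 1 l t).idxOf_lt_idxOf_iff hl hmL hm'L).mpr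
    (idxOf_lt_idxOf_iSeqP hl hii' him him')
  obtain ⟨mm, hmm, hmmL, hmmidx⟩ := exists_padv_eq_some (s := 1) hL hmL
    (by have := List.idxOf_lt_length_of_mem hm'L; omega)
  exact ⟨mm, iSeqP_succ_eq_some_iff.mpr ⟨m, him, hmm⟩,
    jSeqP_isSome_of_idxOf_le (r := t) hl hmmL hm'L (by omega) hD'⟩

lemma isAlmostP_succ_of_idxOf_lt (hl : l.Nodup) {t i i' : ℕ} (hii' : l.idxOf i < l.idxOf i')
    (hi : IsStaircaseP 1 l t i) (hi' : IsHalfP 1 l (t + 1) i') : IsAlmostP 1 l (t + 1) i := by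
  obtain ⟨m, him, hmL, -⟩ := hi
  obtain ⟨mm', himm', hD'⟩ := hi'
  obtain ⟨m', him', hmm'⟩ := iSeqP_succ_eq_some_iff.mp himm'
  have hL := plevel_nodup hl t (b := 1)
  obtain ⟨hm'L, hmm'L, hmm'idx⟩ := (padv_eq_some_iff hL).mp hmm'
  have hmm' := ((plevel_sublist 1 l t).idxOf_lt_idxOf_iff hl hmL hm'L).mpr
    (idxOf_lt_idxOf_iSeqP hl hii' him him')
  have := List.idxOf_lt_length_of_mem hmm'L
  obtain ⟨mm, hmm, hmmL, hmmidx⟩ := exists_padv_eq_some (s := 1) hL hmL (by omega)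
  obtain ⟨z, hz, hzL, hzidx⟩ := exists_padv_eq_some (s := 1) hL hmmL (by omega)
  exact ⟨mm, iSeqP_succ_eq_some_iff.mpr ⟨m, him, hmm⟩, (jSeqP_isSome_succ_iff 1 l t mm).mpr
    ⟨z, hz, jSeqP_isSome_of_idxOf_le hl hzL hmm'L (by omega) hD'⟩⟩

lemma ExtRank.ne_of_idxOf_lt (hl : l.Nodup) {i i' v v' : ℕ} (h : ExtRank 1 l i v)
    (h' : ExtRank 1 l i' v') (hii' : l.idxOf i < l.idxOf i') : v ≠ v' := by
  rintro rfl
  obtain ⟨t, ⟨hst, hna⟩, hcase⟩ := h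
  obtain ⟨t', ⟨hst', -⟩, hcase'⟩ := h'
  obtain rfl : t = t' := by omega
  rcases hcase with ⟨hH, rfl⟩ | ⟨hH, rfl⟩ <;> rcases hcase' with ⟨hH', hv⟩ | ⟨-, hv⟩
  · exact hna (isAlmostP_succ_of_idxOf_lt hl hii' hst hH')
  · omega
  · omega
  · exact hH (isHalfP_succ_of_idxOf_lt hl hii' hst hst')

lemma ExtRank.eq_of_extRank (hl : l.Nodup) {i i' v : ℕ} (hi : i ∈ l)
    (h : ExtRank 1 l i v) (h' : ExtRank 1 l i' v) : i = i' := by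
  rcases lt_trichotomy (l.idxOf i) (l.idxOf i') with hlt | heq | hlt
  · exact absurd rfl (h.ne_of_idxOf_lt hl h' hlt)
  · exact (List.idxOf_inj hi).mp heq
  · exact absurd rfl (h'.ne_of_idxOf_lt hl h hlt)

lemma ExtRank.le_two_mul_length (hb : 0 < b) (hl : l.Nodup) {i v : ℕ} (h : ExtRank b l i v) :
    v ≤ 2 * l.length := by
  obtain ⟨t, ⟨⟨m, him, hmL, -⟩, -⟩, hv⟩ := h
  have := idxOf_add_le_idxOf_iSeqP hb hl him
  have := List.idxOf_lt_length_of_mem ((plevel_sublist b l t).subset hmL)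
  omega

lemma exists_extRank_zero (hb : 0 < b) (hl : l.Nodup) (hne : l ≠ []) :
    ∃ i ∈ l, ExtRank b l i 0 := by
  have hz : l.getLast hne ∈ l := List.getLast_mem hne
  have hzidx : l.idxOf (l.getLast hne) = l.length - 1 := by
    rw [List.getLast_eq_getElem, hl.idxOf_getElem]
  have hnone : iSeqP b l (l.getLast hne) 1 = none := by
    have := List.length_pos_iff.mpr hne
    simp [iSeqP, plevel, hz, padv, hzidx]
    omega
  refine ⟨_, hz, 0, ⟨⟨_, by simp [iSeqP, hz], hz, rfl⟩, ?_⟩, Or.inr ⟨?_, rfl⟩⟩ <;>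
    exact fun ⟨_, hm, _⟩ => by simp [hnone] at hm

end Staircases

lemma existsUnique_max_of_bounded_of_injective {α : Type*} {p : α → Prop} {R : α → ℕ → Prop}
    {N : ℕ} (hle : ∀ i, p i → ∀ v, R i v → v ≤ N) (hne : ∃ i, p i ∧ ∃ v, R i v)
    (hinj : ∀ i, p i → ∀ j, p j → ∀ v, R i v → R j v → i = j) :
    ∃! i, p i ∧ ∃ v, R i v ∧ ∀ j, p j → ∀ w, R j w → w ≤ v := by
  classical
  let q : ℕ → Prop := fun v => ∃ i, p i ∧ R i v
  obtain ⟨i₀, hi₀, v₀, hv₀⟩ := hne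
  obtain ⟨i, hi, hR⟩ : q (Nat.findGreatest q N) :=
    Nat.findGreatest_spec (hle i₀ hi₀ v₀ hv₀) ⟨i₀, hi₀, hv₀⟩
  have hmax : ∀ j, p j → ∀ w, R j w → w ≤ Nat.findGreatest q N :=
    fun j hj w hw => Nat.le_findGreatest (hle j hj w hw) ⟨j, hj, hw⟩
  refine ⟨i, ⟨hi, _, hR, hmax⟩, fun j ⟨hj, w, hw, hjmax⟩ => hinj j hj i hi w hw ?_⟩
  rwa [le_antisymm (hmax j hj w hw) (hjmax i hi _ hR)]

section Paths

variable {n : ℕ} (π : Equiv.Perm (Fin n)) (x : Fin n)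

lemma lenTo_self_eq_minimalPeriod : lenTo π x x = minimalPeriod π x := by
  have hx : x ∈ periodicPts π := π.injective.mem_periodicPts x
  have h : ∃ k, 0 < k ∧ (⇑π)^[k] x = x := mem_periodicPts.mp hx
  rw [lenTo, dif_pos h]
  convert (Nat.find_eq_iff h).mpr ⟨⟨minimalPeriod_pos_of_mem_periodicPts hx,
    isPeriodicPt_minimalPeriod π x⟩, fun k hk ⟨hk₀, hkx⟩ =>
      (IsPeriodicPt.minimalPeriod_le hk₀ hkx).not_gt hk⟩

lemma pathOf_eq_map_range : pathOf π x =
    (List.range (minimalPeriod π (π x))).map fun j => ((⇑π)^[j] (π x)).val := by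
  rw [pathOf, lenTo_self_eq_minimalPeriod, minimalPeriod_apply (π.injective.mem_periodicPts x)]
  simp only [iterate_succ_apply]

lemma pathOf_nodup : (pathOf π x).Nodup := by
  rw [pathOf_eq_map_range]
  exact List.nodup_range.map_on fun i hi j hj hij => iterate_injOn_Iio_minimalPeriod
    (List.mem_range.mp hi) (List.mem_range.mp hj) (Fin.val_injective hij)

lemma pathOf_ne_nil : pathOf π x ≠ [] := by
  rw [pathOf_eq_map_range]
  simpa using (minimalPeriod_pos_of_mem_periodicPts (π.injective.mem_periodicPts (π x))).ne'

end Paths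

/-- (Fich et al., `b = 1`.)  For every path `P` of `π` there is a unique
element of `P` with the maximum extended rank (among elements whose extended rank is defined;
extended ranks `(t, h)` are compared lexicographically, i.e. via the encoding `2t + h`). -/
theorem exists_unique_max_extended_rank (n : ℕ) (π : Equiv.Perm (Fin n)) (x : Fin n)
    (P : List ℕ) (hP : P = pathOf π x) :
    ∃! i : ℕ, i ∈ P ∧ ∃ v, ExtRank 1 P i v ∧ ∀ j ∈ P, ∀ w, ExtRank 1 P j w → w ≤ v := by
  have hl : P.Nodup := hP ▸ pathOf_nodup π x
  obtain ⟨i₀, hi₀, h₀⟩ := exists_extRank_zero one_pos hl (hP ▸ pathOf_ne_nil π x)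
  exact existsUnique_max_of_bounded_of_injective
    (fun _ _ _ h => h.le_two_mul_length one_pos hl) ⟨i₀, hi₀, 0, h₀⟩
    (fun _ hi _ _ _ h h' => h.eq_of_extRank hl hi h')
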